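/- arXiv:1105.5722 — 2 statements merged into one kernel-verified Lean document; each statement's English description precedes it below -/
import Mathlib

section
/- Let K ⊆ L be an algebraic extension of fields of characteristic p > 0, let K_sep denote the relative separable closure of K in L, and assume that the inseparable degree [L : K_sep] is finite and equal to p^e for some natural number e. Then K_sep equals the intermediate field K(L^{p^e}) generated over K by the set {x^{p^e} : x ∈ L}. -/
/-!
The extension `K_sep ⊆ L` is purely inseparable, so the minimal polynomial of `x ∈ L` over `K_sep`
is `X ^ p ^ k - a` with `p ^ k` dividing `[L : K_sep] = p ^ e`; hence `x ^ p ^ e ∈ K_sep`.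
Conversely `K_sep / K` is separable, and a field generated by separable elements is also
generated by their `p ^ e`-th powers.
-/

open IntermediateField Module

theorem IsPurelyInseparable.pow_finrank_mem_range {K L : Type*} [Field K] [Field L] [Algebra K L]
    [IsPurelyInseparable K L] (x : L) : x ^ finrank K L ∈ (algebraMap K L).range := by
  obtain ⟨m, hm⟩ := minpoly.degree_dvd (IsPurelyInseparable.isIntegral' K x)
  rw [hm, pow_mul, minpoly_natDegree_eq]
  exact (algebraMap K L).range.pow_mem (elemExponent_def K x) m

theorem separableClosure_le_adjoin_range_pow (K L : Type*) [Field K] [Field L] [Algebra K L]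
    (q : ℕ) [ExpChar K q] (n : ℕ) :
    separableClosure K L ≤ adjoin K (Set.range fun x : L => x ^ q ^ n) := by
  have hS : separableClosure K L = adjoin K (separableClosure K L : Set L) := (adjoin_self ..).symm
  have : Algebra.IsSeparable K (adjoin K (separableClosure K L : Set L)) :=
    hS ▸ separableClosure.isSeparable K L
  rw [hS, adjoin_eq_adjoin_pow_expChar_pow_of_isSeparable K L _ q n]
  exact adjoin.mono _ _ _ (Set.image_subset_range _ _)

theorem separableClosure_eq_adjoin_pow_pow_of_finInsepDegree_eq_general
    (K L : Type*) [Field K] [Field L] [Algebra K L] [Algebra.IsAlgebraic K L]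
    (p : ℕ) [Fact p.Prime] [CharP K p] (e : ℕ)
    (hdeg : Module.finrank (separableClosure K L) L = p ^ e) :
    separableClosure K L = IntermediateField.adjoin K (Set.range fun x : L => x ^ p ^ e) := by
  have : ExpChar K p := .prime Fact.out
  refine le_antisymm (separableClosure_le_adjoin_range_pow K L p e) (adjoin_le_iff.2 ?_)
  rintro _ ⟨x, rfl⟩
  show x ^ p ^ e ∈ separableClosure K L
  obtain ⟨y, hy⟩ := hdeg ▸ IsPurelyInseparable.pow_finrank_mem_range (K := separableClosure K L) x
  exact hy ▸ y.2

/-- Let `K ⊆ L` be an algebraic extension of fields of characteristic `p > 0`,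
and suppose the inseparable degree `[L : K_sep]` is finite, equal to `p ^ e`.
Then the relative separable closure `K_sep` equals the intermediate field
`K(L^{p^e})` generated over `K` by the `p^e`-th powers of elements of `L`. -/
theorem separableClosure_eq_adjoin_pow_pow_of_finInsepDegree_eq
    (K L : Type*) [Field K] [Field L] [Algebra K L] [Algebra.IsAlgebraic K L]
    (p : ℕ) [Fact p.Prime] [CharP K p] (e : ℕ)
    [FiniteDimensional (separableClosure K L) L]
    (hdeg : Module.finrank (separableClosure K L) L = p ^ e) :
    separableClosure K L = IntermediateField.adjoin K (Set.range fun x : L => x ^ p ^ e) :=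
  separableClosure_eq_adjoin_pow_pow_of_finInsepDegree_eq_general K L p e hdeg
end

section
/- Let A be a commutative domain equipped with an ℕ-grading A = ⊕_{i≥0} A_i (a graded ring structure), let x ∈ A_1 be a nonzero homogeneous element of degree 1, and let n ≥ 1 be an integer. Let K be the fraction field of A, and let K' ⊆ K be the subfield generated by the image of the n-th Veronese subring A^{(n)}. Then the images in K of the powers 1, x, x^2, …, x^{n-1} form a basis of K as a K'-vector space; in particular [K : K'] = n. -/
/-!
Write `V = A^{(n)}`, `K'` for the fraction field of `V` inside `K`, and `X` for the image of `x`.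
As `xⁱ` is homogeneous of degree `i`, a relation `∑ cᵢ xⁱ = 0` with `cᵢ ∈ V` and `i < n` splits,
degree by degree modulo `n`, into `cᵢ xⁱ = 0`; so the powers are independent over `V`, hence over
`K'`. Conversely `Xⁿ ∈ K'`, so `1, …, X^{n-1}` span `K'(X)`, and `K'(X) = K` because a homogeneous
`a` of degree `d` equals `a x^{(n-1)d} / x^{(n-1)d}` with numerator in `V`.
-/

open DirectSum

section Veronese

variable {A : Type*} [CommRing A] (𝒜 : ℕ → AddSubgroup A) [GradedRing 𝒜] (n : ℕ)

theorem pow_mem_graded_of_mem_one {x : A} (hx : x ∈ 𝒜 1) (k : ℕ) : x ^ k ∈ 𝒜 k := by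
  simpa using SetLike.pow_mem_graded k hx

theorem coe_decompose_mul_eq_zero_of_not_modEq {c e : A} {d m : ℕ}
    (hc : ∀ i, ¬ n ∣ i → (decompose 𝒜 c i : A) = 0) (he : e ∈ 𝒜 d) (hdm : ¬ d ≡ m [MOD n]) :
    (decompose 𝒜 (c * e) m : A) = 0 := by
  by_cases hle : d ≤ m
  · rw [coe_decompose_mul_of_right_mem_of_le 𝒜 he hle,
      hc _ fun h => hdm ((Nat.modEq_iff_dvd' hle).mpr h), zero_mul]
  · exact coe_decompose_mul_of_right_mem_of_not_le 𝒜 he hle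

def veroneseSubring : Subring A where
  carrier := {a | ∀ i, ¬ n ∣ i → (decompose 𝒜 a i : A) = 0}
  zero_mem' i _ := by simp
  one_mem' i hi := decompose_of_mem_ne 𝒜 SetLike.GradedOne.one_mem fun h => hi (h ▸ dvd_zero n)
  add_mem' {a b} ha hb i hi := by simp [ha i hi, hb i hi]
  neg_mem' {a} ha i hi := by
    rw [decompose_neg, DFinsupp.neg_apply, NegMemClass.coe_neg, ha i hi, neg_zero]
  mul_mem' {a b} ha hb m hm := by
    classical
    rw [← sum_support_decompose 𝒜 b, Finset.mul_sum, decompose_sum, DFinsupp.finsetSum_apply,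
      AddSubgroup.val_finsetSum]
    refine Finset.sum_eq_zero fun i _ => ?_
    by_cases hi : n ∣ i
    · exact coe_decompose_mul_eq_zero_of_not_modEq 𝒜 n ha (SetLike.coe_mem _)
        fun h => hm (Nat.modEq_zero_iff_dvd.mp (h.symm.trans (Nat.modEq_zero_iff_dvd.mpr hi)))
    · simp [hb i hi]

variable {𝒜 n}

theorem mem_veroneseSubring_of_mem {m : ℕ} (hm : n ∣ m) {a : A} (ha : a ∈ 𝒜 m) :
    a ∈ veroneseSubring 𝒜 n :=
  fun _ hi => decompose_of_mem_ne 𝒜 ha fun h => hi (h ▸ hm)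

theorem linearIndependent_veroneseSubring_of_mem [NoZeroDivisors A] {ι : Type*} {e : ι → A}
    {d : ι → ℕ} (he : ∀ i, e i ∈ 𝒜 (d i)) (he0 : ∀ i, e i ≠ 0)
    (hd : ∀ i j, d i ≡ d j [MOD n] → i = j) :
    LinearIndependent (veroneseSubring 𝒜 n) e := by
  classical
  rw [linearIndependent_iff']
  intro s g hg j hj
  suffices hcomp : ∀ k, n ∣ k → (decompose 𝒜 (g j) k : A) = 0 by
    refine Subtype.ext ((decompose 𝒜).injective ?_)
    ext k
    by_cases hk : n ∣ k
    · simpa using hcomp k hk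
    · simpa using (g j).2 k hk
  intro k hk
  have hrel : ∑ i ∈ s, (decompose 𝒜 (g i * e i) (k + d j) : A) = 0 := by
    simp only [Subring.smul_def, smul_eq_mul] at hg
    rw [← AddSubgroup.val_finsetSum, ← DFinsupp.finsetSum_apply, ← decompose_sum, hg,
      decompose_zero, DirectSum.zero_apply, ZeroMemClass.coe_zero]
  have hkj : k + d j ≡ d j [MOD n] := by
    simpa using (Nat.modEq_zero_iff_dvd.mpr hk).add_right (d j)
  -- only the term `i = j` has degrees in the residue class of `k + d j`
  rw [Finset.sum_eq_single_of_mem j hj fun i _ hij =>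
      coe_decompose_mul_eq_zero_of_not_modEq 𝒜 n (g i).2 (he i) fun h =>
        hij (hd i j (h.trans hkj)),
    coe_decompose_mul_of_right_mem_of_le 𝒜 (he j) (Nat.le_add_left _ _), Nat.add_sub_cancel]
    at hrel
  exact (mul_eq_zero.mp hrel).resolve_right (he0 j)

theorem linearIndependent_pow_veroneseSubring [NoZeroDivisors A] {x : A} (hx1 : x ∈ 𝒜 1)
    (hx0 : x ≠ 0) : LinearIndependent (veroneseSubring 𝒜 n) fun i : Fin n => x ^ (i : ℕ) :=
  linearIndependent_veroneseSubring_of_mem (d := fun i => i)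
    (fun i => pow_mem_graded_of_mem_one 𝒜 hx1 i) (fun _ => pow_ne_zero _ hx0)
    fun i j h => Fin.ext (Nat.ModEq.eq_of_lt_of_lt h i.2 j.2)

end Veronese

theorem LinearIndependent.algebraMap_subfieldClosure {A K ι : Type*} [CommRing A] [Field K]
    [Algebra A K] (hinj : Function.Injective (algebraMap A K)) (R : Subring A) {v : ι → A}
    (hv : LinearIndependent R v) :
    LinearIndependent (Subfield.closure (algebraMap A K '' R)) (algebraMap A K ∘ v) := by
  set F := Subfield.closure (algebraMap A K '' R)
  -- `F` is a fraction field of `R`, and linear independence survives localization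
  let _ : Algebra R F := (((algebraMap A K).comp R.subtype).codRestrict F
    fun r => Subfield.subset_closure ⟨r, r.2, rfl⟩).toAlgebra
  have : IsScalarTower R F K := IsScalarTower.of_algebraMap_eq fun _ => rfl
  have : FaithfulSMul R F := (faithfulSMul_iff_algebraMap_injective R F).mpr fun _ _ h =>
    Subtype.ext (hinj (congrArg Subtype.val h))
  have : IsFractionRing R F := .of_field _ _ fun z => by
    obtain ⟨a, ha, b, hb, hz⟩ := Subfield.mem_closure_iff.mp z.2
    rw [← Subring.coe_map, Subring.closure_eq] at ha hb
    obtain ⟨a, ha, rfl⟩ := ha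
    obtain ⟨b, hb, rfl⟩ := hb
    exact ⟨⟨a, ha⟩, ⟨b, hb⟩, Subtype.ext hz.symm⟩
  exact (hv.map' ((Algebra.linearMap A K).restrictScalars R) (LinearMap.ker_eq_bot.mpr hinj))
    |>.localization F (nonZeroDivisors R)

theorem IntermediateField.adjoin_simple_toSubmodule_le_span_pow {F K : Type*} [Field F]
    [Field K] [Algebra F K] {X : K} {n : ℕ} (hn : 0 < n) (hXn : X ^ n ∈ (algebraMap F K).range) :
    Subalgebra.toSubmodule (adjoin F {X}).toSubalgebra ≤
      Submodule.span F (Set.range fun i : Fin n => X ^ (i : ℕ)) := by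
  obtain ⟨c, hc⟩ := hXn
  have hX : IsAlgebraic F X := (IsIntegral.of_pow hn (hc ▸ isIntegral_algebraMap)).isAlgebraic
  rw [adjoin_simple_toSubalgebra_of_isAlgebraic hX, Algebra.adjoin_eq_span,
    ← Submonoid.powers_eq_closure, Submodule.span_le]
  rintro _ ⟨m, rfl⟩
  have hm : X ^ m = c ^ (m / n) • X ^ (m % n) := by
    rw [Algebra.smul_def, map_pow, hc, ← pow_mul, ← pow_add, Nat.div_add_mod]
  change X ^ m ∈ _
  rw [hm]
  exact Submodule.smul_mem _ _ (Submodule.subset_span ⟨⟨m % n, Nat.mod_lt m hn⟩, rfl⟩)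

theorem adjoin_algebraMap_eq_top_of_veronese {A K : Type*} [CommRing A] [Field K] [Algebra A K]
    [IsFractionRing A K] {𝒜 : ℕ → AddSubgroup A} [GradedRing 𝒜] {x : A} (hx1 : x ∈ 𝒜 1)
    (hx0 : x ≠ 0) {n : ℕ} (hn : 1 ≤ n) :
    IntermediateField.adjoin (Subfield.closure (algebraMap A K '' veroneseSubring 𝒜 n))
      {algebraMap A K x} = ⊤ := by
  classical
  set F := Subfield.closure (algebraMap A K '' veroneseSubring 𝒜 n)
  set L := IntermediateField.adjoin F {algebraMap A K x}
  have hX : algebraMap A K x ≠ 0 := (map_ne_zero_iff _ (IsFractionRing.injective A K)).mpr hx0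
  have hhom : ∀ d, ∀ a ∈ 𝒜 d, algebraMap A K a ∈ L := by
    intro d a ha
    have hdeg : d + (n - 1) * d = n * d := by
      rw [Nat.sub_one_mul, Nat.add_sub_cancel' (Nat.le_mul_of_pos_left d hn)]
    have hv : a * x ^ ((n - 1) * d) ∈ veroneseSubring 𝒜 n :=
      mem_veroneseSubring_of_mem ⟨d, hdeg⟩ <|
        SetLike.mul_mem_graded ha (pow_mem_graded_of_mem_one 𝒜 hx1 _)
    have hvL : algebraMap A K (a * x ^ ((n - 1) * d)) ∈ L :=
      L.algebraMap_mem ⟨_, Subfield.subset_closure ⟨_, hv, rfl⟩⟩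
    rw [map_mul, map_pow] at hvL
    simpa [hX] using
      div_mem hvL (pow_mem (IntermediateField.mem_adjoin_simple_self F _) ((n - 1) * d))
  have hA : ∀ a, algebraMap A K a ∈ L := fun a => by
    rw [← sum_support_decompose 𝒜 a, map_sum]
    exact sum_mem fun i _ => hhom i _ (SetLike.coe_mem _)
  refine eq_top_iff.mpr fun z _ => ?_
  obtain ⟨a, b, -, rfl⟩ := IsFractionRing.div_surjective A z
  exact div_mem (hA a) (hA b)

/-- Let `A` be an ℕ-graded commutative domain, `x` a nonzero homogeneous element
of degree `1` and `n ≥ 1`.  Let `K` be the fraction field of `A` and `K'` the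
subfield of `K` generated by the image of the `n`-th Veronese subring
`A^{(n)} = {a | a has nonzero homogeneous components only in degrees divisible by n}`.
Then `1, x, …, x^{n-1}` is a basis of `K` over `K'`; in particular `[K : K'] = n`. -/
theorem basis_powers_fractionRing_over_veronese
    (A : Type*) [CommRing A] [IsDomain A]
    (𝒜 : ℕ → AddSubgroup A) [GradedRing 𝒜]
    (x : A) (hx1 : x ∈ 𝒜 1) (hx0 : x ≠ 0) (n : ℕ) (hn : 1 ≤ n)
    (K' : Subfield (FractionRing A))
    (hK' : K' = Subfield.closure
      (algebraMap A (FractionRing A) ''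
        {a : A | ∀ i : ℕ, ¬ n ∣ i → (DirectSum.decompose 𝒜 a i : A) = 0})) :
    (∃ b : Module.Basis (Fin n) K' (FractionRing A),
        ∀ i : Fin n, b i = algebraMap A (FractionRing A) x ^ (i : ℕ)) ∧
      Module.finrank K' (FractionRing A) = n := by
  change K' = Subfield.closure (algebraMap A _ '' veroneseSubring 𝒜 n) at hK'
  set X := algebraMap A (FractionRing A) x
  have hli : LinearIndependent K' fun i : Fin n => X ^ (i : ℕ) := by
    subst hK'
    simpa [Function.comp_def] using LinearIndependent.algebraMap_subfieldClosure
      (IsFractionRing.injective A (FractionRing A)) _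
      (linearIndependent_pow_veroneseSubring hx1 hx0)
  have hXn : X ^ n ∈ (algebraMap K' (FractionRing A)).range := by
    refine ⟨⟨X ^ n, hK' ▸ Subfield.subset_closure ⟨x ^ n, ?_, map_pow _ x n⟩⟩, rfl⟩
    exact mem_veroneseSubring_of_mem dvd_rfl (pow_mem_graded_of_mem_one 𝒜 hx1 n)
  have htop : IntermediateField.adjoin K' {X} = ⊤ := by
    subst hK'
    exact adjoin_algebraMap_eq_top_of_veronese hx1 hx0 hn
  have hspan := IntermediateField.adjoin_simple_toSubmodule_le_span_pow hn hXn
  rw [htop] at hspan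
  let b := Module.Basis.mk hli (by simpa using hspan)
  exact ⟨⟨b, Module.Basis.mk_apply hli _⟩, by rw [Module.finrank_eq_card_basis b, Fintype.card_fin]⟩
end
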